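/- arXiv:1712.07370 — 2 statements merged into one kernel-verified Lean document; each statement's English description precedes it below -/
import Mathlib

section
/- For a finite connected simple graph G, the semigroup (e^{-tL²})_{t≥0} is positivity preserving if and only if G is complete. -/
open Matrix Finset

private lemma lap_entry {V : Type*} [Fintype V] [DecidableEq V]
    (G : SimpleGraph V) [DecidableRel G.Adj] (i j : V) :
    G.lapMatrix ℝ i j = if i = j then (G.degree i : ℝ) else if G.Adj i j then -1 else 0 := by
  by_cases h : i = j
  · subst h; simp [SimpleGraph.lapMatrix, SimpleGraph.degMatrix, G.irrefl]
  · simp only [SimpleGraph.lapMatrix, SimpleGraph.degMatrix, Matrix.sub_apply,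
      Matrix.of_apply, SimpleGraph.adjMatrix_apply, if_neg h]
    split <;> simp [Matrix.diagonal_apply_ne _ h]

/-- For a finite connected simple graph `G` on at least two vertices, the
semigroup `(e^{-tL²})_{t ≥ 0}` is positivity preserving (equivalently, all
off-diagonal entries of `L²` are `≤ 0`) if and only if `G` is complete. -/
theorem stmt_4 {V : Type*} [Fintype V] [DecidableEq V]
    (G : SimpleGraph V) [DecidableRel G.Adj]
    (hconn : G.Connected) (hcard : 2 ≤ Fintype.card V) :
    (∀ v w : V, v ≠ w → (G.lapMatrix ℝ * G.lapMatrix ℝ) v w ≤ 0) ↔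
      (∀ v w : V, v ≠ w → G.Adj v w) := by
  constructor
  · intro h
    -- no common neighbor for nonadjacent distinct pairs
    have key : ∀ v w : V, v ≠ w → ¬ G.Adj v w → ∀ u, ¬ (G.Adj v u ∧ G.Adj u w) := by
      intro v w hvw hadj u hu
      have h0 := h v w hvw
      rw [Matrix.mul_apply] at h0
      have hterm : ∀ x : V, 0 ≤ G.lapMatrix ℝ v x * G.lapMatrix ℝ x w := by
        intro x
        rw [lap_entry, lap_entry]
        by_cases hx1 : v = x
        · subst hx1
          simp only [if_pos rfl, if_neg hvw, if_neg hadj, mul_zero, le_refl]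
        · by_cases hx2 : x = w
          · subst hx2
            rw [if_neg hx1, if_neg hadj, zero_mul]
          · simp only [if_neg hx1, if_neg hx2]
            split <;> split <;> norm_num
      have hsum : ∀ x : V, G.lapMatrix ℝ v x * G.lapMatrix ℝ x w = 0 := by
        intro x
        have := (Finset.sum_eq_zero_iff_of_nonneg (fun x _ => hterm x)).1
          (le_antisymm h0 (Finset.sum_nonneg (fun x _ => hterm x)))
        exact this x (Finset.mem_univ x)
      have hu1 : v ≠ u := by rintro rfl; exact G.irrefl hu.1
      have hu2 : u ≠ w := by rintro rfl; exact G.irrefl hu.2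
      have := hsum u
      rw [lap_entry, lap_entry, if_neg hu1, if_neg hu2, if_pos hu.1, if_pos hu.2] at this
      norm_num at this
    -- connectivity + no common neighbor along walks forces adjacency
    intro v w hvw
    obtain ⟨p⟩ := (hconn v w)
    have : ∀ {a b : V} (_ : G.Walk a b), G.Adj a b ∨ a = b := by
      intro a b p
      induction p with
      | nil => exact Or.inr rfl
      | @cons x y z hadj q ih =>
        rcases ih with h1 | rfl
        · by_cases hxz : x = z
          · exact Or.inr hxz
          · by_cases haxz : G.Adj x z
            · exact Or.inl haxz
            · exact absurd ⟨hadj, h1⟩ (key x z hxz haxz y)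
        · exact Or.inl hadj
    rcases this p with h1 | rfl
    · exact h1
    · exact absurd rfl hvw
  · intro hcomp v w hvw
    rw [Matrix.mul_apply]
    have hdeg : ∀ x : V, (Fintype.card V : ℝ) - 1 ≤ (G.degree x : ℝ) := by
      intro x
      have : Finset.univ.erase x ⊆ G.neighborFinset x := by
        intro u hu
        rw [Finset.mem_erase] at hu
        rw [SimpleGraph.mem_neighborFinset]
        exact (hcomp u x hu.1).symm
      have hc := Finset.card_le_card this
      rw [Finset.card_erase_of_mem (Finset.mem_univ x), Finset.card_univ] at hc
      rw [SimpleGraph.degree]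
      have : (Fintype.card V - 1 : ℕ) ≤ (G.neighborFinset x).card := hc
      push_cast [Nat.cast_sub (by omega : 1 ≤ Fintype.card V)] at *
      calc (Fintype.card V : ℝ) - 1 = ((Fintype.card V - 1 : ℕ) : ℝ) := by
            push_cast [Nat.cast_sub (by omega : 1 ≤ Fintype.card V)]; ring
        _ ≤ _ := by exact_mod_cast hc
    have hsub : ({v, w} : Finset V) ⊆ Finset.univ := Finset.subset_univ _
    rw [← Finset.sum_sdiff hsub, Finset.sum_pair hvw]
    have hrest : ∑ u ∈ Finset.univ \ {v, w}, G.lapMatrix ℝ v u * G.lapMatrix ℝ u w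
        ≤ (Fintype.card V : ℝ) - 2 := by
      have hb : ∀ u ∈ Finset.univ \ ({v, w} : Finset V),
          G.lapMatrix ℝ v u * G.lapMatrix ℝ u w ≤ 1 := by
        intro u hu
        simp only [Finset.mem_sdiff, Finset.mem_insert, Finset.mem_singleton] at hu
        push_neg at hu
        rw [lap_entry, lap_entry, if_neg (fun e => hu.2.1 e.symm), if_neg hu.2.2]
        split <;> split <;> norm_num
      calc ∑ u ∈ Finset.univ \ {v, w}, G.lapMatrix ℝ v u * G.lapMatrix ℝ u w
          ≤ ∑ _u ∈ Finset.univ \ ({v, w} : Finset V), (1 : ℝ) := Finset.sum_le_sum hb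
        _ = ((Finset.univ \ ({v, w} : Finset V)).card : ℝ) := by simp
        _ = (Fintype.card V : ℝ) - 2 := by
            rw [Finset.card_sdiff_of_subset hsub, Finset.card_univ, Finset.card_pair hvw]
            push_cast [Nat.cast_sub (by omega : 2 ≤ Fintype.card V)]; ring
    have hv : G.lapMatrix ℝ v v * G.lapMatrix ℝ v w ≤ -((Fintype.card V : ℝ) - 1) := by
      rw [lap_entry, lap_entry, if_pos rfl, if_neg hvw, if_pos (hcomp v w hvw)]
      nlinarith [hdeg v]
    have hw : G.lapMatrix ℝ v w * G.lapMatrix ℝ w w ≤ -((Fintype.card V : ℝ) - 1) := by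
      rw [lap_entry, lap_entry, if_pos rfl, if_neg hvw, if_pos (hcomp v w hvw)]
      nlinarith [hdeg w]
    have hn : (2 : ℝ) ≤ (Fintype.card V : ℝ) := by exact_mod_cast hcard
    linarith
end

section
/- Let L be the discrete Laplacian of a finite connected simple graph. Then there exists t₀ > 0 such that for all t ≥ t₀, the matrix e^{-tL²} has all entries strictly positive. -/
open Matrix

/-- Eventual irreducibility/positivity: for the discrete Laplacian `L` of a
finite connected simple graph, there exists `t₀ > 0` such that for all
`t ≥ t₀` the matrix `e^{-tL²}` has all entries strictly positive. -/
theorem stmt_16 {V : Type*} [Fintype V] [DecidableEq V] [Nonempty V]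
    (G : SimpleGraph V) [DecidableRel G.Adj] (hconn : G.Connected) :
    ∃ t₀ : ℝ, 0 < t₀ ∧ ∀ t : ℝ, t₀ ≤ t → ∀ v w : V,
      0 < NormedSpace.exp (-(t • (G.lapMatrix ℝ * G.lapMatrix ℝ))) v w := by
  classical
  set L := G.lapMatrix ℝ with hLdef
  have hLps : L.PosSemidef := SimpleGraph.posSemidef_lapMatrix ℝ G
  have hAps : (L * L).PosSemidef := by
    have h := Matrix.posSemidef_conjTranspose_mul_self L
    rwa [hLps.1] at h
  have hH : (L * L).IsHermitian := hAps.1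
  set μ : V → ℝ := hH.eigenvalues with hμdef
  set U : Matrix V V ℝ := (hH.eigenvectorUnitary : Matrix V V ℝ) with hUdef
  have hUstar : star U * U = 1 := hH.eigenvectorUnitary.2.1
  have hUstar' : U * star U = 1 := hH.eigenvectorUnitary.2.2
  have hUinv : U⁻¹ = star U := Matrix.inv_eq_left_inv hUstar
  have hUisUnit : IsUnit U := ⟨⟨U, star U, hUstar', hUstar⟩, rfl⟩
  have hof : (RCLike.ofReal ∘ μ : V → ℝ) = μ := by funext i; simp
  have key : ∀ t : ℝ, NormedSpace.exp (-(t • (L * L)))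
      = U * diagonal (fun i => Real.exp (-(t * μ i))) * star U := by
    intro t
    have hdiag : diagonal (fun i => -(t * μ i)) = -(t • diagonal μ) := by
      rw [← Matrix.diagonal_smul, ← Matrix.diagonal_neg]
      congr 1 <;> funext i <;> simp
    have h1 : -(t • (L * L)) = U * diagonal (fun i => -(t * μ i)) * U⁻¹ := by
      rw [hUinv, hdiag]
      conv_lhs => rw [hH.spectral_theorem, hof, Unitary.conjStarAlgAut_apply, ← hUdef]
      simp only [Matrix.mul_smul, Matrix.smul_mul, Matrix.neg_mul, Matrix.mul_neg]
    rw [h1, Matrix.exp_conj U _ hUisUnit, hUinv, Matrix.exp_diagonal, Pi.exp_def]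
    congr 2
    funext i
    rw [← Real.exp_eq_exp_ℝ]
  have entry : ∀ (t : ℝ) (v w : V), NormedSpace.exp (-(t • (L * L))) v w
      = ∑ i, U v i * Real.exp (-(t * μ i)) * U w i := by
    intro t v w
    rw [key t, Matrix.mul_apply]
    refine Finset.sum_congr rfl fun i _ => ?_
    rw [Matrix.mul_diagonal, Matrix.star_apply, star_trivial]
  -- eigenvectors with eigenvalue 0 are constant
  have hker : ∀ i, μ i = 0 → ∀ v w : V, hH.eigenvectorBasis i v = hH.eigenvectorBasis i w := by
    intro i hi
    set x : V → ℝ := ⇑(hH.eigenvectorBasis i) with hxdef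
    have hx : (L * L) *ᵥ x = 0 := by
      have h := hH.mulVec_eigenvectorBasis i
      rw [show hH.eigenvalues i = 0 from hi, zero_smul] at h
      exact h
    have hLsymm : Lᵀ = L := G.isSymm_lapMatrix (R := ℝ)
    have hLx : L *ᵥ x = 0 := by
      have h0 : (L *ᵥ x) ⬝ᵥ (L *ᵥ x) = 0 := by
        calc (L *ᵥ x) ⬝ᵥ (L *ᵥ x) = (x ᵥ* Lᵀ) ⬝ᵥ (L *ᵥ x) := by rw [Matrix.vecMul_transpose]
        _ = (x ᵥ* L) ⬝ᵥ (L *ᵥ x) := by rw [hLsymm]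
        _ = x ⬝ᵥ (L *ᵥ (L *ᵥ x)) := by rw [← Matrix.dotProduct_mulVec]
        _ = x ⬝ᵥ ((L * L) *ᵥ x) := by rw [Matrix.mulVec_mulVec]
        _ = 0 := by rw [hx, dotProduct_zero]
      exact dotProduct_self_eq_zero.mp h0
    have hconst := (G.lapMatrix_mulVec_eq_zero_iff_forall_reachable (x := x)).mp
      (by exact hLx)
    exact fun v w => hconst v w (hconn v w)
  -- existence of a zero eigenvalue
  have hμ0 : ∀ i, 0 ≤ μ i := fun i => hAps.eigenvalues_nonneg i
  have hex : ∃ i, μ i = 0 := by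
    by_contra hcon
    push_neg at hcon
    have hdet : (L * L).det = 0 := by
      rw [← Matrix.exists_mulVec_eq_zero_iff]
      refine ⟨fun _ => 1, ?_, ?_⟩
      · intro h
        have := congrFun h (Classical.arbitrary V)
        simp at this
      · rw [← Matrix.mulVec_mulVec, hLdef, G.lapMatrix_mulVec_const_eq_zero,
          Matrix.mulVec_zero]
    rw [hH.det_eq_prod_eigenvalues] at hdet
    obtain ⟨i, _, hi⟩ := Finset.prod_eq_zero_iff.mp hdet
    exact hcon i (by exact_mod_cast hi)
  obtain ⟨i₀, hi₀⟩ := hex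
  -- orthonormality facts
  have horthon := hH.eigenvectorBasis.orthonormal
  have hinner : ∀ i j, (∑ v, hH.eigenvectorBasis i v * hH.eigenvectorBasis j v)
      = if i = j then 1 else 0 := by
    intro i j
    have h := orthonormal_iff_ite.mp horthon i j
    rw [PiLp.inner_apply] at h
    simpa [mul_comm] using h
  -- uniqueness of the zero eigenvalue index
  have huniq : ∀ i, μ i = 0 → i = i₀ := by
    intro i hi
    by_contra hne
    have h0 := hinner i i₀
    rw [if_neg hne] at h0
    have h1 := hinner i i
    rw [if_pos rfl] at h1
    set v₀ := Classical.arbitrary V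
    have hci : ∀ v, hH.eigenvectorBasis i v = hH.eigenvectorBasis i v₀ :=
      fun v => hker i hi v v₀
    have hc0 : ∀ v, hH.eigenvectorBasis i₀ v = hH.eigenvectorBasis i₀ v₀ :=
      fun v => hker i₀ hi₀ v v₀
    have e0 : (Fintype.card V : ℝ) *
        (hH.eigenvectorBasis i v₀ * hH.eigenvectorBasis i₀ v₀) = 0 := by
      rw [← h0]
      rw [Finset.sum_congr rfl fun v _ => by rw [hci v, hc0 v]]
      rw [Finset.sum_const, nsmul_eq_mul]
      simp
    have e1 : (Fintype.card V : ℝ) *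
        (hH.eigenvectorBasis i v₀ * hH.eigenvectorBasis i v₀) = 1 := by
      rw [← h1]
      rw [Finset.sum_congr rfl fun v _ => by rw [hci v]]
      rw [Finset.sum_const, nsmul_eq_mul]
      simp
    have hcard : (0:ℝ) < (Fintype.card V : ℝ) := by
      exact_mod_cast Fintype.card_pos
    have hiz : hH.eigenvectorBasis i v₀ ≠ 0 := by
      intro hz
      rw [hz] at e1
      simp at e1
    have h0z : hH.eigenvectorBasis i₀ v₀ = 0 := by
      rcases mul_eq_zero.mp e0 with h | h
      · exact absurd h (ne_of_gt hcard)
      · rcases mul_eq_zero.mp h with h' | h'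
        · exact absurd h' hiz
        · exact h'
    have e2 : (Fintype.card V : ℝ) *
        (hH.eigenvectorBasis i₀ v₀ * hH.eigenvectorBasis i₀ v₀) = 1 := by
      have h1' := hinner i₀ i₀
      rw [if_pos rfl] at h1'
      rw [← h1']
      rw [Finset.sum_congr rfl fun v _ => by rw [hc0 v]]
      rw [Finset.sum_const, nsmul_eq_mul]
      simp
    rw [h0z] at e2
    simp at e2
  -- entries of U
  have hUB : ∀ v i, U v i = hH.eigenvectorBasis i v := fun v i => rfl
  set v₀ := Classical.arbitrary V with hv₀
  set c : ℝ := hH.eigenvectorBasis i₀ v₀ with hcdef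
  have hUc : ∀ v, U v i₀ = c := fun v => by rw [hUB]; exact hker i₀ hi₀ v v₀
  set N : ℝ := (Fintype.card V : ℝ) with hN
  have hNpos : (0:ℝ) < N := by rw [hN]; exact_mod_cast Fintype.card_pos
  have hcc : N * (c * c) = 1 := by
    have h1 := hinner i₀ i₀
    rw [if_pos rfl] at h1
    rw [hN, ← h1, Finset.sum_congr rfl fun v _ => by
      rw [hker i₀ hi₀ v v₀, ← hcdef], Finset.sum_const, nsmul_eq_mul,
      Finset.card_univ]
  -- rows of U have unit norm
  have hrow : ∀ v, ∑ j, U v j * U v j = 1 := by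
    intro v
    have h := congrFun (congrFun hUstar' v) v
    rw [Matrix.mul_apply] at h
    rw [Finset.sum_congr rfl fun j _ => by
      rw [show (star U) j v = U v j from by rw [Matrix.star_apply, star_trivial]]] at h
    rw [h, Matrix.one_apply_eq]
  have habs : ∀ v i, |U v i| ≤ 1 := by
    intro v i
    have h := Finset.single_le_sum (f := fun j => U v j * U v j)
      (fun j _ => mul_self_nonneg _) (Finset.mem_univ i)
    rw [hrow v] at h
    exact abs_le_one_iff_mul_self_le_one.mpr h
  -- entry split
  have split : ∀ (t : ℝ) (v w : V), NormedSpace.exp (-(t • (L * L))) v w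
      = c * c + ∑ i ∈ Finset.univ.erase i₀, U v i * Real.exp (-(t * μ i)) * U w i := by
    intro t v w
    rw [entry t v w, ← Finset.add_sum_erase _ _ (Finset.mem_univ i₀), hUc v, hUc w, hi₀]
    norm_num
  by_cases hne : (Finset.univ.erase i₀ : Finset V).Nonempty
  · -- main case
    set m : ℝ := (Finset.univ.erase i₀).inf' hne μ with hm
    have hmpos : 0 < m := by
      obtain ⟨j, hj, hjm⟩ := Finset.exists_mem_eq_inf' hne μ
      rw [hm, hjm]
      rcases lt_or_eq_of_le (hμ0 j) with h | h
      · exact h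
      · exact absurd (huniq j h.symm) (Finset.ne_of_mem_erase hj)
    refine ⟨max 1 ((Real.log (N ^ 2) + 1) / m), lt_of_lt_of_le one_pos (le_max_left _ _),
      fun t ht v w => ?_⟩
    have ht1 : (1:ℝ) ≤ t := le_trans (le_max_left _ _) ht
    have htm : Real.log (N ^ 2) + 1 ≤ t * m := by
      rw [← div_le_iff₀ hmpos]
      exact le_trans (le_max_right _ _) ht
    set E : ℝ := Real.exp (-(t * m)) with hE
    have hE2 : E * N ^ 2 < 1 := by
      have h1 : E ≤ Real.exp (-(Real.log (N ^ 2) + 1)) :=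
        Real.exp_le_exp.mpr (by linarith)
      have h2 : Real.exp (-(Real.log (N ^ 2) + 1))
          = (N ^ 2)⁻¹ * Real.exp (-1) := by
        rw [neg_add, Real.exp_add, Real.exp_neg, Real.exp_log (by positivity)]
      have h3 : Real.exp (-1) < 1 := Real.exp_lt_one_iff.mpr (by norm_num)
      have h4 : (0:ℝ) < N ^ 2 := by positivity
      rw [h2] at h1
      calc E * N ^ 2 ≤ ((N ^ 2)⁻¹ * Real.exp (-1)) * N ^ 2 := by nlinarith
      _ = Real.exp (-1) := by field_simp
      _ < 1 := h3
    have hterm : ∀ i ∈ Finset.univ.erase i₀,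
        -E ≤ U v i * Real.exp (-(t * μ i)) * U w i := by
      intro i hi
      have hmi : m ≤ μ i := Finset.inf'_le _ hi
      have hEe : Real.exp (-(t * μ i)) ≤ E := by
        rw [hE]
        apply Real.exp_le_exp.mpr
        have : t * m ≤ t * μ i := by nlinarith
        linarith
      have h1 := habs v i
      have h2 := habs w i
      have h3 := neg_abs_le (U v i)
      have h4 := neg_abs_le (U w i)
      have h5 := abs_nonneg (U v i)
      have h6 := abs_nonneg (U w i)
      have hepos : 0 < Real.exp (-(t * μ i)) := Real.exp_pos _
      nlinarith [abs_mul_abs_self (U v i), abs_mul_abs_self (U w i),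
        neg_abs_le (U v i * U w i), abs_mul (U v i) (U w i),
        mul_le_one₀ h1 h6 h2]
    have hrest : -(N * E) ≤ ∑ i ∈ Finset.univ.erase i₀,
        U v i * Real.exp (-(t * μ i)) * U w i := by
      have h1 := Finset.sum_le_sum hterm
      rw [Finset.sum_const] at h1
      have h2 : ((Finset.univ.erase i₀).card : ℝ) ≤ N := by
        rw [hN]
        exact_mod_cast Finset.card_le_univ _
      have hEpos : 0 < E := Real.exp_pos _
      calc -(N * E) ≤ -(((Finset.univ.erase i₀).card : ℝ) * E) := by nlinarith
      _ = (Finset.univ.erase i₀).card • (-E) := by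
          rw [nsmul_eq_mul]; ring
      _ ≤ _ := h1
    rw [split t v w]
    have hEpos : 0 < E := Real.exp_pos _
    nlinarith
  · -- single-vertex-like case
    refine ⟨1, one_pos, fun t _ v w => ?_⟩
    rw [split t v w, Finset.not_nonempty_iff_eq_empty.mp hne, Finset.sum_empty, add_zero]
    nlinarith
end
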